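/- Let T > 0, α ∈ (0,1) and λ > 0. There exists a constant C = C(α,λ,T) > 0 such that for every positive integer N with δ = T/N, one has ∫_0^T ∫_0^{t_r} (u − t_u)^λ (r−u)^{−α−1} du dr ≤ C δ^{λ−α}. -/

import Mathlib

/-!
Since `0 ≤ u - t_u ≤ δ`, the inner integral is at most
`δ^λ ∫_0^{t_r} (r - u)^{-α-1} du ≤ δ^λ (r - t_r)^{-α} / α` whenever `t_r < r`, i.e. off the
(null) set of grid points. The function `r ↦ (r - t_r)^{-α}` is `δ`-periodic and equals `r^{-α}`
on `(0, δ)`, so its integral over `[0, T] = [0, Nδ]` is `N δ^{1-α} / (1-α) = T δ^{-α} / (1-α)`.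
This gives the bound with `C = T / (α (1 - α))`.
-/

/-- The largest grid point `δ⌊u/δ⌋` of the uniform partition with mesh `δ` not exceeding `u`. -/
noncomputable def tgrid (δ u : ℝ) : ℝ := δ * (⌊u / δ⌋ : ℤ)

open MeasureTheory intervalIntegral Real Set

lemma intervalIntegral.integral_mono_of_nonneg {μ : Measure ℝ} {f g : ℝ → ℝ} {a b : ℝ}
    (hab : a ≤ b) (hf : 0 ≤ᵐ[μ.restrict (Ioc a b)] f) (hg : IntervalIntegrable g μ a b)
    (hfg : f ≤ᵐ[μ.restrict (Ioc a b)] g) : ∫ u in a..b, f u ∂μ ≤ ∫ u in a..b, g u ∂μ := by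
  simpa only [integral_of_le hab] using MeasureTheory.integral_mono_of_nonneg hf hg.1 hfg

lemma integral_mul_rpow_sub_le {f : ℝ → ℝ} {M α r t : ℝ} (hα : 0 < α) (ht : 0 ≤ t)
    (htr : t < r) (hf : ∀ u ∈ Icc 0 t, f u ∈ Icc 0 M) :
    ∫ u in 0..t, f u * (r - u) ^ (-α - 1) ≤ M * (r - t) ^ (-α) / α := by
  have hM : 0 ≤ M := (hf 0 ⟨le_rfl, ht⟩).1.trans (hf 0 ⟨le_rfl, ht⟩).2
  have hkernel : ContinuousOn (fun u : ℝ => (r - u) ^ (-α - 1)) (uIcc 0 t) := by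
    refine (continuousOn_const.sub continuousOn_id).rpow_const fun u hu => Or.inl ?_
    rw [uIcc_of_le ht] at hu
    exact (sub_pos.2 (hu.2.trans_lt htr)).ne'
  have hkernel_nonneg : ∀ u ∈ Ioc 0 t, 0 ≤ (r - u) ^ (-α - 1) := fun u hu =>
    rpow_nonneg (sub_nonneg.2 (hu.2.trans htr.le)) _
  calc ∫ u in 0..t, f u * (r - u) ^ (-α - 1)
      ≤ ∫ u in 0..t, M * (r - u) ^ (-α - 1) := by
        refine integral_mono_of_nonneg ht ?_ (hkernel.intervalIntegrable.const_mul M) ?_ <;>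
          refine ae_restrict_of_forall_mem measurableSet_Ioc fun u hu => ?_
        · exact mul_nonneg (hf u (Ioc_subset_Icc_self hu)).1 (hkernel_nonneg u hu)
        · exact mul_le_mul_of_nonneg_right (hf u (Ioc_subset_Icc_self hu)).2 (hkernel_nonneg u hu)
    _ = M * (((r - t) ^ (-α) - r ^ (-α)) / α) := by
        rw [intervalIntegral.integral_const_mul, integral_comp_sub_left (fun x => x ^ (-α - 1)),
          integral_rpow (Or.inr ⟨by linarith, notMem_uIcc_of_lt (by linarith) (by linarith)⟩),
          sub_zero, show -α - 1 + 1 = -α by ring, div_neg, ← neg_div, neg_sub]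
    _ ≤ M * (r - t) ^ (-α) / α := by
        rw [mul_div_assoc]
        gcongr
        exact sub_le_self _ (rpow_nonneg (ht.trans htr.le) _)

section tgrid

variable {δ : ℝ}

lemma tgrid_le (hδ : 0 < δ) (u : ℝ) : tgrid δ u ≤ u :=
  calc tgrid δ u ≤ δ * (u / δ) := mul_le_mul_of_nonneg_left (Int.floor_le _) hδ.le
    _ = u := mul_div_cancel₀ u hδ.ne'

lemma sub_tgrid_le (hδ : 0 < δ) (u : ℝ) : u - tgrid δ u ≤ δ := by
  have h : u / δ < ⌊u / δ⌋ + 1 := Int.lt_floor_add_one _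
  rw [div_lt_iff₀ hδ] at h
  unfold tgrid
  linarith

lemma tgrid_nonneg (hδ : 0 < δ) {u : ℝ} (hu : 0 ≤ u) : 0 ≤ tgrid δ u :=
  mul_nonneg hδ.le (Int.cast_nonneg (Int.floor_nonneg.2 (div_nonneg hu hδ.le)))

lemma tgrid_add_self (hδ : δ ≠ 0) (u : ℝ) : tgrid δ (u + δ) = tgrid δ u + δ := by
  unfold tgrid
  rw [add_div, div_self hδ, Int.floor_add_one]
  push_cast
  ring

lemma tgrid_eq_zero (hδ : 0 < δ) {u : ℝ} (hu : u ∈ Ico 0 δ) : tgrid δ u = 0 := by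
  have : ⌊u / δ⌋ = 0 := Int.floor_eq_zero_iff.2
    ⟨div_nonneg hu.1 hδ.le, (div_lt_one hδ).2 hu.2⟩
  simp [tgrid, this]

lemma ae_tgrid_lt (hδ : 0 < δ) : ∀ᵐ r : ℝ, tgrid δ r < r :=
  ((countable_range fun k : ℤ => δ * k).ae_notMem volume).mono fun r hr =>
    (tgrid_le hδ r).lt_of_ne fun h => hr ⟨_, h⟩

lemma periodic_sub_tgrid_rpow (hδ : δ ≠ 0) (p : ℝ) :
    Function.Periodic (fun r => (r - tgrid δ r) ^ p) δ := fun r => by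
  simp only [tgrid_add_self hδ, add_sub_add_right_eq_sub]

lemma eqOn_sub_tgrid_rpow (hδ : 0 < δ) (p : ℝ) :
    EqOn (fun r => (r - tgrid δ r) ^ p) (fun r => r ^ p) (Ioo 0 δ) := fun r hr => by
  simp only [tgrid_eq_zero hδ (Ioo_subset_Ico_self hr), sub_zero]

lemma intervalIntegrable_sub_tgrid_rpow (hδ : 0 < δ) {p : ℝ} (hp : -1 < p) (a b : ℝ) :
    IntervalIntegrable (fun r => (r - tgrid δ r) ^ p) volume a b := by
  refine (periodic_sub_tgrid_rpow hδ.ne' p).intervalIntegrable₀ hδ.ne' ?_ a b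
  rw [intervalIntegrable_iff_integrableOn_Ioo_of_le hδ.le]
  exact (((intervalIntegrable_rpow' hp).1).mono_set Ioo_subset_Ioc_self).congr_fun
    (eqOn_sub_tgrid_rpow hδ p).symm measurableSet_Ioo

lemma integral_sub_tgrid_rpow (hδ : 0 < δ) {p : ℝ} (hp : -1 < p) (N : ℕ) :
    ∫ r in 0..N * δ, (r - tgrid δ r) ^ p = N * (δ ^ (p + 1) / (p + 1)) := by
  have hperiod : ∫ r in 0..δ, (r - tgrid δ r) ^ p = δ ^ (p + 1) / (p + 1) := by
    rw [integral_of_le hδ.le, integral_Ioc_eq_integral_Ioo,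
      setIntegral_congr_fun measurableSet_Ioo (eqOn_sub_tgrid_rpow hδ p),
      ← integral_Ioc_eq_integral_Ioo, ← integral_of_le hδ.le, integral_rpow (Or.inl hp),
      zero_rpow (by linarith), sub_zero]
  have := (periodic_sub_tgrid_rpow hδ.ne' p).intervalIntegral_add_zsmul_eq N 0
    (intervalIntegrable_sub_tgrid_rpow hδ hp)
  simpa [hperiod] using this

lemma integral_sub_tgrid_rpow_mul_nonneg (hδ : 0 < δ) {α lam r : ℝ} (hr : 0 ≤ r) :
    0 ≤ ∫ u in 0..tgrid δ r, (u - tgrid δ u) ^ lam * (r - u) ^ (-α - 1) :=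
  integral_nonneg (tgrid_nonneg hδ hr) fun u hu =>
    mul_nonneg (rpow_nonneg (sub_nonneg.2 (tgrid_le hδ u)) _)
      (rpow_nonneg (sub_nonneg.2 (hu.2.trans (tgrid_le hδ r))) _)

lemma integral_sub_tgrid_rpow_mul_le (hδ : 0 < δ) {α lam r : ℝ} (hα : 0 < α) (hlam : 0 ≤ lam)
    (hr : 0 ≤ r) (hlt : tgrid δ r < r) :
    ∫ u in 0..tgrid δ r, (u - tgrid δ u) ^ lam * (r - u) ^ (-α - 1)
      ≤ δ ^ lam * (r - tgrid δ r) ^ (-α) / α :=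
  integral_mul_rpow_sub_le hα (tgrid_nonneg hδ hr) hlt fun u _ =>
    ⟨rpow_nonneg (sub_nonneg.2 (tgrid_le hδ u)) _,
      rpow_le_rpow (sub_nonneg.2 (tgrid_le hδ u)) (sub_tgrid_le hδ u) hlam⟩

end tgrid

/-- For `α ∈ (0,1)` and `λ > 0` there is `C = C(α,λ,T)` such that for every partition with
mesh `δ = T/N`, `∫_0^T ∫_0^{t_r} (u − t_u)^λ (r−u)^{−α−1} du dr ≤ C δ^{λ−α}`. -/
theorem stmt_5 (α lam T : ℝ) (hα0 : 0 < α) (hα1 : α < 1) (hlam : 0 < lam) (hT : 0 < T) :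
    ∃ C : ℝ, 0 < C ∧ ∀ N : ℕ, 0 < N →
      (∫ r in (0:ℝ)..T, ∫ u in (0:ℝ)..tgrid (T / N) r,
          (u - tgrid (T / N) u) ^ lam * (r - u) ^ (-α - 1))
        ≤ C * (T / N) ^ (lam - α) := by
  have h1α : 0 < 1 - α := sub_pos.2 hα1
  refine ⟨T / (α * (1 - α)), by positivity, fun N hN => ?_⟩
  set δ := T / N
  have hδ : 0 < δ := by positivity
  have hNδ : N * δ = T := mul_div_cancel₀ T (by positivity)
  have hp : -1 < -α := by linarith
  calc (∫ r in 0..T, ∫ u in 0..tgrid δ r, (u - tgrid δ u) ^ lam * (r - u) ^ (-α - 1))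
      ≤ ∫ r in 0..T, δ ^ lam / α * (r - tgrid δ r) ^ (-α) := by
        refine integral_mono_of_nonneg hT.le ?_
          ((intervalIntegrable_sub_tgrid_rpow hδ hp 0 T).const_mul _) ?_
        · exact ae_restrict_of_forall_mem measurableSet_Ioc fun r hr =>
            integral_sub_tgrid_rpow_mul_nonneg hδ hr.1.le
        · filter_upwards [ae_restrict_mem measurableSet_Ioc, ae_restrict_of_ae (ae_tgrid_lt hδ)]
            with r hr hlt
          exact (integral_sub_tgrid_rpow_mul_le hδ hα0 hlam.le hr.1.le hlt).trans_eq (by ring)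
    _ = δ ^ lam / α * (N * (δ ^ (-α + 1) / (-α + 1))) := by
        rw [intervalIntegral.integral_const_mul, ← hNδ, integral_sub_tgrid_rpow hδ hp]
    _ = N * (δ ^ lam * δ ^ (-α + 1)) / α / (-α + 1) := by ring
    _ = T / (α * (1 - α)) * δ ^ (lam - α) := by
        rw [← rpow_add hδ, show lam + (-α + 1) = lam - α + 1 by ring, rpow_add_one hδ.ne',
          ← hNδ, div_div]
        ring
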